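/- Let K be a field, X a finite nonempty alphabet, G a subgroup of K×, and ℓ : G → ℝ≥0 a length function (ℓ(1) = 0, ℓ(gh) ≤ ℓ(g) + ℓ(h), ℓ(g⁻¹) = ℓ(g)). Let S : X* → K be a series recognized by a deterministic linear representation (u, μ, v) such that all entries of every μ(x) for x ∈ X and all entries of v lie in G ∪ {0}, and such that S(w) ∈ G ∪ {0} for all w ∈ X*. Then S has bounded ℓ-variation: for every c ≥ 0 there exists C ≥ 0 such that for all words w, w' ∈ X* with S(w) ≠ 0 and S(w') ≠ 0, if there exist a word p and words w₁, w₂ with w = p·w₁, w' = p·w₂ and |w₁| + |w₂| ≤ c, then ℓ(S(w)·S(w')⁻¹) ≤ C. -/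

import Mathlib

/-- Product of the matrices `μ x` along the word `w`. -/
def wordProd {X K : Type*} [Semiring K] {n : ℕ} (μ : X → Matrix (Fin n) (Fin n) K)
    (w : List X) : Matrix (Fin n) (Fin n) K :=
  (w.map μ).prod

/-- `(u, μ, v)` is a linear representation of the series `S : X* → K`. -/
def IsLinRep {X K : Type*} [Semiring K] {n : ℕ} (S : List X → K)
    (u : Fin n → K) (μ : X → Matrix (Fin n) (Fin n) K) (v : Fin n → K) : Prop :=
  ∀ w : List X, S w = dotProduct u (Matrix.mulVec (wordProd μ w) v)

/-- A series is rational if it admits a linear representation. -/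
def IsRational {X K : Type*} [Semiring K] (S : List X → K) : Prop :=
  ∃ (n : ℕ) (u : Fin n → K) (μ : X → Matrix (Fin n) (Fin n) K) (v : Fin n → K),
    IsLinRep S u μ v

/-- `p` is an accepting path for the word `w` in the weighted automaton associated to
`(u, μ, v)`. -/
def IsAcceptingPath {X K : Type*} [Semiring K] {n : ℕ}
    (u : Fin n → K) (μ : X → Matrix (Fin n) (Fin n) K) (v : Fin n → K)
    (w : List X) (p : Fin (w.length + 1) → Fin n) : Prop :=
  u (p 0) ≠ 0 ∧
  (∀ i : Fin w.length, μ (w.get i) (p i.castSucc) (p i.succ) ≠ 0) ∧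
  v (p (Fin.last w.length)) ≠ 0

/-- The linear representation `(u, μ, v)` is unambiguous: every word labels at most one
accepting path. -/
def IsUnambiguous {X K : Type*} [Semiring K] {n : ℕ}
    (u : Fin n → K) (μ : X → Matrix (Fin n) (Fin n) K) (v : Fin n → K) : Prop :=
  ∀ (w : List X) (p q : Fin (w.length + 1) → Fin n),
    IsAcceptingPath u μ v w p → IsAcceptingPath u μ v w q → p = q

/-- `S` is a Pólya series: its nonzero coefficients lie in a finitely generated subgroup
of `Kˣ`. -/
def IsPolya {X K : Type*} [Field K] (S : List X → K) : Prop :=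
  ∃ G : Subgroup Kˣ, G.FG ∧ ∀ w : List X, S w = 0 ∨ ∃ g ∈ G, (g : K) = S w

/-- The linear representation is deterministic: at most one initial state, and every row
of each `μ x` has at most one nonzero entry. -/
def IsDeterministic {X K : Type*} [Semiring K] {n : ℕ}
    (u : Fin n → K) (μ : X → Matrix (Fin n) (Fin n) K) : Prop :=
  (∀ i j : Fin n, u i ≠ 0 → u j ≠ 0 → i = j) ∧
  ∀ (x : X) (p q q' : Fin n), μ x p q ≠ 0 → μ x p q' ≠ 0 → q = q'

/-- Minimal linear representation: no linear representation of `S` has smaller rank. -/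
def IsMinimalRep {X K : Type*} [Semiring K] {n : ℕ} (S : List X → K)
    (u : Fin n → K) (μ : X → Matrix (Fin n) (Fin n) K) (v : Fin n → K) : Prop :=
  IsLinRep S u μ v ∧
  ∀ (m : ℕ) (u' : Fin m → K) (μ' : X → Matrix (Fin m) (Fin m) K) (v' : Fin m → K),
    IsLinRep S u' μ' v' → n ≤ m

/-- The set `Ω = {u · μ(w) : w ∈ X*}` is contained in a finite union of subspaces of
dimension at most 1, i.e. the linear hull has dimension at most 1. -/
def HullDimLE1 {X K : Type*} [Field K] {n : ℕ}
    (u : Fin n → K) (μ : X → Matrix (Fin n) (Fin n) K) : Prop :=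
  ∃ (k : ℕ) (W : Fin k → Submodule K (Fin n → K)),
    (∀ i, Module.finrank K (W i) ≤ 1) ∧
    ∀ w : List X, ∃ i, Matrix.vecMul u (wordProd μ w) ∈ W i


/-!
After reading a common prefix `p`, a deterministic automaton sits in a single state `s`, so
`S (p ++ w₁) = λ * β₁` and `S (p ++ w₂) = λ * β₂` with the same prefix weight `λ`. The ratio
`S (p ++ w₁) / S (p ++ w₂) = β₁ / β₂` is then a product of `|w₁| + |w₂| + 2` weights of the
automaton and their inverses (the transitions read from `s` and two final weights), so its length
is at most `(c + 2) * M`, where `M` bounds the lengths of the finitely many weights.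
-/

open Matrix Function

section Support

variable {R ι ι' : Type*} [NonUnitalNonAssocSemiring R] [Fintype ι]

theorem exists_ne_zero_of_dotProduct_ne_zero {r a : ι → R} (h : r ⬝ᵥ a ≠ 0) :
    ∃ i, r i ≠ 0 ∧ a i ≠ 0 := by
  obtain ⟨i, -, hi⟩ := Finset.exists_ne_zero_of_sum_ne_zero h
  exact ⟨i, left_ne_zero_of_mul hi, right_ne_zero_of_mul hi⟩

theorem dotProduct_eq_mul_of_support_subsingleton {r : ι → R} (hr : (support r).Subsingleton)
    {i : ι} (hi : r i ≠ 0) (a : ι → R) : r ⬝ᵥ a = r i * a i := by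
  refine Finset.sum_eq_single i (fun j _ hj => ?_) (by simp)
  rw [not_ne_iff.mp fun hj' => hj (hr hj' hi), zero_mul]

theorem support_vecMul_subsingleton {r : ι → R} {A : Matrix ι ι' R}
    (hr : (support r).Subsingleton) (hA : ∀ i, (support (A i)).Subsingleton) :
    (support (r ᵥ* A)).Subsingleton := by
  intro j hj j' hj'
  obtain ⟨i, hri, hij⟩ := exists_ne_zero_of_dotProduct_ne_zero hj
  obtain ⟨i', hri', hij'⟩ := exists_ne_zero_of_dotProduct_ne_zero hj'
  obtain rfl := hr hri hri'
  exact hA i hij hij'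

end Support

section WordProd

variable {X K : Type*} [Semiring K] {n : ℕ} {μ : X → Matrix (Fin n) (Fin n) K}

theorem wordProd_nil : wordProd μ [] = 1 := rfl

theorem wordProd_cons (x : X) (w : List X) : wordProd μ (x :: w) = μ x * wordProd μ w := by
  simp [wordProd]

theorem wordProd_append (w w' : List X) : wordProd μ (w ++ w') = wordProd μ w * wordProd μ w' := by
  simp [wordProd]

theorem IsDeterministic.support_row_subsingleton {u : Fin n → K} (hdet : IsDeterministic u μ)
    (x : X) (i : Fin n) : (support (μ x i)).Subsingleton :=
  fun _ hq _ hq' => hdet.2 x i _ _ hq hq'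

theorem IsDeterministic.support_vecMul_wordProd_subsingleton {u : Fin n → K}
    (hdet : IsDeterministic u μ) (p : List X) : (support (u ᵥ* wordProd μ p)).Subsingleton := by
  induction p using List.reverseRecOn with
  | nil =>
    rw [wordProd_nil, vecMul_one]
    exact fun _ hi _ hj => hdet.1 _ _ hi hj
  | append_singleton p x ih =>
    rw [wordProd_append, ← vecMul_vecMul, wordProd_cons, wordProd_nil, mul_one]
    exact support_vecMul_subsingleton ih (hdet.support_row_subsingleton x)

end WordProd

section Length

variable {K : Type*}

def ZeroOrLengthLE [MonoidWithZero K] (G : Subgroup Kˣ) (ℓ : G → NNReal) (B : NNReal) (k : K) :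
    Prop :=
  k = 0 ∨ ∃ g : G, ((g : Kˣ) : K) = k ∧ ℓ g ≤ B

namespace ZeroOrLengthLE

section MonoidWithZero

variable [MonoidWithZero K] {G : Subgroup Kˣ} {ℓ : G → NNReal} {B B' : NNReal} {k k' : K}

theorem zero : ZeroOrLengthLE G ℓ B 0 := Or.inl rfl

theorem mono (h : ZeroOrLengthLE G ℓ B k) (hB : B ≤ B') : ZeroOrLengthLE G ℓ B' k := by
  rcases h with h | ⟨g, hg, hgB⟩
  · exact Or.inl h
  · exact Or.inr ⟨g, hg, hgB.trans hB⟩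

theorem mul (hlmul : ∀ g h : G, ℓ (g * h) ≤ ℓ g + ℓ h) (h : ZeroOrLengthLE G ℓ B k)
    (h' : ZeroOrLengthLE G ℓ B' k') : ZeroOrLengthLE G ℓ (B + B') (k * k') := by
  rcases h with rfl | ⟨g, rfl, hg⟩
  · exact .inl (zero_mul _)
  rcases h' with rfl | ⟨g', rfl, hg'⟩
  · exact .inl (mul_zero _)
  exact .inr ⟨g * g', rfl, (hlmul g g').trans (add_le_add hg hg')⟩

theorem length_le [Nontrivial K] {g : G} (h : ZeroOrLengthLE G ℓ B ((g : Kˣ) : K)) : ℓ g ≤ B := by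
  rcases h with h | ⟨g', hg', hB⟩
  · exact absurd h (Units.ne_zero _)
  · rwa [← Subtype.ext (Units.ext hg')]

theorem exists_uniform {ι : Type*} [Finite ι] (f : ι → K)
    (hf : ∀ i, f i = 0 ∨ ∃ g ∈ G, (g : K) = f i) : ∃ B, ∀ i, ZeroOrLengthLE G ℓ B (f i) := by
  have hbound : ∀ i, ∃ B, ZeroOrLengthLE G ℓ B (f i) := fun i => by
    rcases hf i with h | ⟨g, hg, hgf⟩
    · exact ⟨0, .inl h⟩
    · exact ⟨ℓ ⟨g, hg⟩, .inr ⟨⟨g, hg⟩, hgf, le_rfl⟩⟩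
  choose b hb using hbound
  obtain ⟨B, hB⟩ := Finite.exists_le b
  exact ⟨B, fun i => (hb i).mono (hB i)⟩

end MonoidWithZero

section GroupWithZero

variable [GroupWithZero K] {G : Subgroup Kˣ} {ℓ : G → NNReal} {B B' : NNReal} {k k' : K}

theorem inv (hlinv : ∀ g : G, ℓ g⁻¹ = ℓ g) (h : ZeroOrLengthLE G ℓ B k) :
    ZeroOrLengthLE G ℓ B k⁻¹ := by
  rcases h with rfl | ⟨g, rfl, hg⟩
  · exact .inl inv_zero
  · exact .inr ⟨g⁻¹, by simp, (hlinv g).trans_le hg⟩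

theorem div (hlmul : ∀ g h : G, ℓ (g * h) ≤ ℓ g + ℓ h) (hlinv : ∀ g : G, ℓ g⁻¹ = ℓ g)
    (h : ZeroOrLengthLE G ℓ B k) (h' : ZeroOrLengthLE G ℓ B' k') :
    ZeroOrLengthLE G ℓ (B + B') (k / k') := by
  rw [div_eq_mul_inv]
  exact h.mul hlmul (h'.inv hlinv)

end GroupWithZero

section Semiring

variable [Semiring K] {G : Subgroup Kˣ} {ℓ : G → NNReal} {B B' : NNReal}

theorem dotProduct {ι : Type*} [Fintype ι] (hlmul : ∀ g h : G, ℓ (g * h) ≤ ℓ g + ℓ h)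
    {r a : ι → K} (hr : (support r).Subsingleton) (hrB : ∀ i, ZeroOrLengthLE G ℓ B (r i))
    (haB : ∀ i, ZeroOrLengthLE G ℓ B' (a i)) : ZeroOrLengthLE G ℓ (B + B') (r ⬝ᵥ a) := by
  by_cases h : r ⬝ᵥ a = 0
  · exact .inl h
  obtain ⟨i, hi, -⟩ := exists_ne_zero_of_dotProduct_ne_zero h
  rw [dotProduct_eq_mul_of_support_subsingleton hr hi]
  exact (hrB i).mul hlmul (haB i)

theorem mulVec_wordProd {X : Type*} {n : ℕ} {μ : X → Matrix (Fin n) (Fin n) K} {v : Fin n → K}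
    {M : NNReal} (hlmul : ∀ g h : G, ℓ (g * h) ≤ ℓ g + ℓ h)
    (hrow : ∀ x i, (support (μ x i)).Subsingleton) (hμ : ∀ x i j, ZeroOrLengthLE G ℓ M (μ x i j))
    (hv : ∀ i, ZeroOrLengthLE G ℓ M (v i)) (w : List X) (s : Fin n) :
    ZeroOrLengthLE G ℓ ((w.length + 1) * M) ((wordProd μ w *ᵥ v) s) := by
  induction w generalizing s with
  | nil => simpa [wordProd_nil] using hv s
  | cons x w ih =>
    rw [wordProd_cons, ← mulVec_mulVec]
    refine (dotProduct hlmul (hrow x s) (hμ x s) ih).mono (le_of_eq ?_)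
    push_cast [List.length_cons]
    ring

end Semiring

end ZeroOrLengthLE

end Length

theorem deterministic_bounded_variation_general {K X : Type*} [Field K] [Fintype X]
    (G : Subgroup Kˣ) (ℓ : G → NNReal)
    (hlmul : ∀ g h : G, ℓ (g * h) ≤ ℓ g + ℓ h)
    (hlinv : ∀ g : G, ℓ g⁻¹ = ℓ g)
    (S : List X → K)
    {n : ℕ} (u : Fin n → K) (μ : X → Matrix (Fin n) (Fin n) K) (v : Fin n → K)
    (hrep : IsLinRep S u μ v) (hdet : IsDeterministic u μ)
    (hμG : ∀ (x : X) (i j : Fin n), μ x i j = 0 ∨ ∃ g ∈ G, (g : K) = μ x i j)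
    (hvG : ∀ i : Fin n, v i = 0 ∨ ∃ g ∈ G, (g : K) = v i) :
    ∀ c : ℕ, ∃ C : NNReal, ∀ (w w' : List X) (g g' : G),
      ((g : Kˣ) : K) = S w → ((g' : Kˣ) : K) = S w' →
      (∃ p w₁ w₂ : List X, w = p ++ w₁ ∧ w' = p ++ w₂ ∧ w₁.length + w₂.length ≤ c) →
      ℓ (g * g'⁻¹) ≤ C := by
  intro c
  obtain ⟨Mμ, hMμ⟩ := ZeroOrLengthLE.exists_uniform (ℓ := ℓ)
    (fun e : X × Fin n × Fin n => μ e.1 e.2.1 e.2.2) fun e => hμG _ _ _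
  obtain ⟨Mv, hMv⟩ := ZeroOrLengthLE.exists_uniform (ℓ := ℓ) v hvG
  have hsuffix := ZeroOrLengthLE.mulVec_wordProd hlmul hdet.support_row_subsingleton
    (fun x i j => (hMμ (x, i, j)).mono le_sup_left) (fun i => (hMv i).mono (le_sup_right (a := Mμ)))
  refine ⟨(c + 2) * (Mμ ⊔ Mv), ?_⟩
  rintro w w' g g' hg hg' ⟨p, w₁, w₂, rfl, rfl, hlen⟩
  have hS : ∀ q, S (p ++ q) = (u ᵥ* wordProd μ p) ⬝ᵥ (wordProd μ q *ᵥ v) := fun q => by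
    rw [hrep, wordProd_append, ← mulVec_mulVec, dotProduct_mulVec]
  have hSw : S (p ++ w₁) ≠ 0 := hg ▸ Units.ne_zero _
  obtain ⟨s, hs, -⟩ := exists_ne_zero_of_dotProduct_ne_zero (hS w₁ ▸ hSw)
  have hprefix := dotProduct_eq_mul_of_support_subsingleton
    (hdet.support_vecMul_wordProd_subsingleton p) hs
  have hratio : (((g * g'⁻¹ : G) : Kˣ) : K) = (wordProd μ w₁ *ᵥ v) s / (wordProd μ w₂ *ᵥ v) s := by
    push_cast
    rw [← div_eq_mul_inv, hg, hg', hS, hS, hprefix, hprefix, mul_div_mul_left _ _ hs]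
  refine ZeroOrLengthLE.length_le (hratio ▸ ((hsuffix w₁ s).div hlmul hlinv (hsuffix w₂ s)).mono ?_)
  have hlen' : (w₁.length : NNReal) + w₂.length ≤ c := by exact_mod_cast hlen
  calc (w₁.length + 1) * (Mμ ⊔ Mv) + (w₂.length + 1) * (Mμ ⊔ Mv)
      = ((w₁.length : NNReal) + w₂.length + 2) * (Mμ ⊔ Mv) := by ring
    _ ≤ (c + 2) * (Mμ ⊔ Mv) := by gcongr

/-- A series recognized by a deterministic weighted automaton whose weights lie in
`G ∪ {0}` has bounded `ℓ`-variation for any length function `ℓ` on `G`. -/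
theorem deterministic_bounded_variation {K X : Type*} [Field K] [Fintype X] [Nonempty X]
    (G : Subgroup Kˣ) (ℓ : G → NNReal)
    (hl1 : ℓ 1 = 0) (hlmul : ∀ g h : G, ℓ (g * h) ≤ ℓ g + ℓ h)
    (hlinv : ∀ g : G, ℓ g⁻¹ = ℓ g)
    (S : List X → K)
    {n : ℕ} (u : Fin n → K) (μ : X → Matrix (Fin n) (Fin n) K) (v : Fin n → K)
    (hrep : IsLinRep S u μ v) (hdet : IsDeterministic u μ)
    (hμG : ∀ (x : X) (i j : Fin n), μ x i j = 0 ∨ ∃ g ∈ G, (g : K) = μ x i j)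
    (hvG : ∀ i : Fin n, v i = 0 ∨ ∃ g ∈ G, (g : K) = v i)
    (hSG : ∀ w : List X, S w = 0 ∨ ∃ g ∈ G, (g : K) = S w) :
    ∀ c : ℕ, ∃ C : NNReal, ∀ (w w' : List X) (g g' : G),
      ((g : Kˣ) : K) = S w → ((g' : Kˣ) : K) = S w' →
      (∃ p w₁ w₂ : List X, w = p ++ w₁ ∧ w' = p ++ w₂ ∧ w₁.length + w₂.length ≤ c) →
      ℓ (g * g'⁻¹) ≤ C :=
  deterministic_bounded_variation_general G ℓ hlmul hlinv S u μ v hrep hdet hμG hvG
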